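/- Let d ≥ 4 and let G be a finite simple bipartite graph with parts A and B such that every vertex of A has degree d and every vertex of B has degree 2. Let B' ⊆ B be a subset of maximum size among subsets whose vertices have pairwise disjoint neighborhoods. Then there exists a set S' ⊆ B \ B' with |S'| = |A \ N(B')| = |A| − 2|B'| such that A \ N(B') ⊆ N(S') and every vertex of S' has exactly one neighbor in A \ N(B'); in particular, for S := B' ∪ S' we have N(S) = A and |S| = |A| − |B'|. -/

import Mathlib

open Finset

/-- The vertices of `B'` have pairwise disjoint neighborhoods in `G`. -/
def PDisjNbrs {V : Type*} (G : SimpleGraph V) (B' : Finset V) : Prop :=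
  ∀ b₁ ∈ B', ∀ b₂ ∈ B', b₁ ≠ b₂ → ∀ a, ¬(G.Adj a b₁ ∧ G.Adj a b₂)

/-- `N(S)`: the vertices of `A` adjacent to at least one vertex of `S`. -/
def nbhd {V : Type*} [DecidableEq V] (G : SimpleGraph V) [DecidableRel G.Adj]
    (A S : Finset V) : Finset V :=
  A.filter fun a => ∃ b ∈ S, G.Adj a b

/-- The bipartite subgraph of `G` induced on `A ∪ C` contains a matching saturating
every vertex of `A`, encoded by an injective choice of partners. -/
def SatMatch {V : Type*} (G : SimpleGraph V) (A C : Finset V) : Prop :=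
  ∃ f : V → V, Set.InjOn f ↑A ∧ ∀ a ∈ A, f a ∈ C ∧ G.Adj a (f a)

/-
Maximality of `B'` forces every `b ∈ B \ B'` to have a neighbour in `N(B')`: otherwise `B' ∪ {b}`
would still have pairwise disjoint neighbourhoods. As `b` has degree 2, it has at most one
neighbour in `R := A \ N(B')`. Every `a ∈ R` has some neighbour, which lies in `B \ B'`; choosing
one for each `a ∈ R` is therefore injective, and its image is the required `S'`. Finally
`|N(B')| = 2|B'|` because the neighbourhoods are disjoint of size 2.
-/

namespace PDisjNbrs

variable {V : Type*} {G : SimpleGraph V}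

theorem insert [DecidableEq V] {S : Finset V} {b : V} (hS : PDisjNbrs G S)
    (hb : ∀ a, G.Adj a b → ∀ b' ∈ S, ¬G.Adj a b') : PDisjNbrs G (insert b S) := by
  intro b₁ h₁ b₂ h₂ hne a ⟨ha₁, ha₂⟩
  rw [mem_insert] at h₁ h₂
  rcases h₁ with rfl | h₁ <;> rcases h₂ with rfl | h₂
  · exact hne rfl
  · exact hb a ha₁ b₂ h₂ ha₂
  · exact hb a ha₂ b₁ h₁ ha₁
  · exact hS b₁ h₁ b₂ h₂ hne a ⟨ha₁, ha₂⟩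

end PDisjNbrs

theorem card_filter_adj_eq_degree {V : Type*} [Fintype V] (G : SimpleGraph V)
    [DecidableRel G.Adj] (A : Finset V) {b : V} (hb : ∀ a, G.Adj a b → a ∈ A) :
    #(A.filter (G.Adj · b)) = G.degree b := by
  rw [← G.card_neighborFinset_eq_degree]
  congr 1
  ext a
  rw [mem_filter, G.mem_neighborFinset]
  exact ⟨fun h => h.2.symm, fun hab => ⟨hb a hab.symm, hab.symm⟩⟩

section Neighbourhoods

variable {V : Type*} [DecidableEq V] (G : SimpleGraph V) [DecidableRel G.Adj] (A : Finset V)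

theorem mem_nbhd {S : Finset V} {a : V} : a ∈ nbhd G A S ↔ a ∈ A ∧ ∃ b ∈ S, G.Adj a b :=
  mem_filter

theorem nbhd_subset (S : Finset V) : nbhd G A S ⊆ A :=
  filter_subset _ _

theorem nbhd_union_eq_of_sdiff_subset {S T : Finset V} (h : A \ nbhd G A S ⊆ nbhd G A T) :
    nbhd G A (S ∪ T) = A := by
  refine (nbhd_subset G A _).antisymm fun a ha => ?_
  rw [mem_nbhd]
  by_cases haS : a ∈ nbhd G A S
  · obtain ⟨-, b, hb, hab⟩ := (mem_nbhd G A).mp haS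
    exact ⟨ha, b, mem_union_left _ hb, hab⟩
  · obtain ⟨-, b, hb, hab⟩ := (mem_nbhd G A).mp (h (mem_sdiff.mpr ⟨ha, haS⟩))
    exact ⟨ha, b, mem_union_right _ hb, hab⟩

theorem card_nbhd_of_pdisjNbrs {S : Finset V} {k : ℕ} (hS : PDisjNbrs G S)
    (hk : ∀ b ∈ S, #(A.filter (G.Adj · b)) = k) : #(nbhd G A S) = k * #S := by
  have hbiUnion : nbhd G A S = S.biUnion fun b => A.filter (G.Adj · b) := by
    ext a
    simp only [mem_nbhd, mem_biUnion, mem_filter]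
    tauto
  rw [hbiUnion, card_biUnion, sum_const_nat hk, mul_comm]
  intro b₁ h₁ b₂ h₂ hne
  exact disjoint_filter.mpr fun a _ ha₁ ha₂ => hS b₁ h₁ b₂ h₂ hne a ⟨ha₁, ha₂⟩

theorem exists_adj_mem_sdiff_of_mem_sdiff_nbhd [Fintype V] {B B' : Finset V} {a : V}
    (ha : a ∈ A \ nbhd G A B') (hdeg : 0 < G.degree a) (haB : ∀ b, G.Adj a b → b ∈ B) :
    ∃ b ∈ B \ B', G.Adj a b := by
  obtain ⟨haA, haN⟩ := mem_sdiff.mp ha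
  obtain ⟨b, hab⟩ := (G.degree_pos_iff_exists_adj a).mp hdeg
  refine ⟨b, mem_sdiff.mpr ⟨haB b hab, fun hb => haN ?_⟩, hab⟩
  exact (mem_nbhd G A).mpr ⟨haA, b, hb, hab⟩

theorem exists_subset_card_eq_of_card_filter_adj_le_one {R C : Finset V} (hR : R ⊆ A)
    (hcov : ∀ a ∈ R, ∃ b ∈ C, G.Adj a b) (huniq : ∀ b ∈ C, #(R.filter (G.Adj · b)) ≤ 1) :
    ∃ S' ⊆ C, #S' = #R ∧ R ⊆ nbhd G A S' ∧ ∀ b ∈ S', #(R.filter (G.Adj · b)) = 1 := by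
  choose! f hfC hfadj using hcov
  have hinj : Set.InjOn f R := fun a₁ h₁ a₂ h₂ heq =>
    card_le_one.mp (huniq _ (hfC a₁ h₁)) a₁ (mem_filter.mpr ⟨h₁, hfadj a₁ h₁⟩) a₂
      (mem_filter.mpr ⟨h₂, heq ▸ hfadj a₂ h₂⟩)
  refine ⟨R.image f, ?_, card_image_of_injOn hinj, ?_, ?_⟩
  · rintro _ hb
    obtain ⟨a, ha, rfl⟩ := mem_image.mp hb
    exact hfC a ha
  · exact fun a ha => (mem_nbhd G A).mpr ⟨hR ha, f a, mem_image_of_mem f ha, hfadj a ha⟩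
  · rintro _ hb
    obtain ⟨a, ha, rfl⟩ := mem_image.mp hb
    exact le_antisymm (huniq _ (hfC a ha))
      (card_pos.mpr ⟨a, mem_filter.mpr ⟨ha, hfadj a ha⟩⟩)

end Neighbourhoods

section Maximum

variable {V : Type*} [DecidableEq V] (G : SimpleGraph V) [DecidableRel G.Adj] (A B : Finset V)
  {B' : Finset V}

theorem exists_adj_mem_nbhd_of_maximum (hB' : B' ⊆ B) (hpd : PDisjNbrs G B')
    (hmax : ∀ B'' ⊆ B, PDisjNbrs G B'' → #B'' ≤ #B') {b : V} (hb : b ∈ B \ B')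
    (hbA : ∀ a, G.Adj a b → a ∈ A) : ∃ c ∈ nbhd G A B', G.Adj c b := by
  obtain ⟨hbB, hbB'⟩ := mem_sdiff.mp hb
  by_contra! hfree
  have hins : PDisjNbrs G (insert b B') := hpd.insert fun a hab b' hb' hab' =>
    hfree a ((mem_nbhd G A).mpr ⟨hbA a hab, b', hb', hab'⟩) hab
  have := hmax _ (insert_subset hbB hB') hins
  rw [card_insert_of_notMem hbB'] at this
  omega

theorem card_filter_adj_sdiff_nbhd_le_one [Fintype V] (hB' : B' ⊆ B) (hpd : PDisjNbrs G B')
    (hmax : ∀ B'' ⊆ B, PDisjNbrs G B'' → #B'' ≤ #B') {b : V} (hb : b ∈ B \ B')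
    (hbA : ∀ a, G.Adj a b → a ∈ A) (hdeg : G.degree b = 2) :
    #((A \ nbhd G A B').filter (G.Adj · b)) ≤ 1 := by
  obtain ⟨c, hc, hcb⟩ := exists_adj_mem_nbhd_of_maximum G A B hB' hpd hmax hb hbA
  have hsub : (A \ nbhd G A B').filter (G.Adj · b) ⊆ (G.neighborFinset b).erase c := by
    intro a ha
    obtain ⟨ha, hab⟩ := mem_filter.mp ha
    refine mem_erase.mpr ⟨?_, (G.mem_neighborFinset b a).mpr hab.symm⟩
    rintro rfl
    exact (mem_sdiff.mp ha).2 hc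
  calc #((A \ nbhd G A B').filter (G.Adj · b))
      ≤ #((G.neighborFinset b).erase c) := card_le_card hsub
    _ = 1 := by
      rw [card_erase_of_mem ((G.mem_neighborFinset b c).mpr hcb.symm),
        G.card_neighborFinset_eq_degree, hdeg]

end Maximum

theorem stmt_17 {V : Type*} [Fintype V] [DecidableEq V] (G : SimpleGraph V)
    [DecidableRel G.Adj] (A B : Finset V) (hdisj : Disjoint A B)
    (hbip : ∀ v w, G.Adj v w → (v ∈ A ∧ w ∈ B) ∨ (v ∈ B ∧ w ∈ A))
    (d : ℕ) (hd : 4 ≤ d)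
    (hdegA : ∀ a ∈ A, G.degree a = d) (hdegB : ∀ b ∈ B, G.degree b = 2)
    (B' : Finset V) (hB' : B' ⊆ B) (hpd : PDisjNbrs G B')
    (hmax : ∀ B'' ⊆ B, PDisjNbrs G B'' → B''.card ≤ B'.card) :
    ∃ S' ⊆ B \ B',
      S'.card = (A \ nbhd G A B').card ∧
      S'.card = A.card - 2 * B'.card ∧
      A \ nbhd G A B' ⊆ nbhd G A S' ∧
      (∀ b ∈ S', (A.filter fun a => a ∉ nbhd G A B' ∧ G.Adj a b).card = 1) ∧
      nbhd G A (B' ∪ S') = A ∧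
      (B' ∪ S').card = A.card - B'.card := by
  have hnbrA : ∀ b ∈ B, ∀ a, G.Adj a b → a ∈ A := fun b hb a hab =>
    ((hbip a b hab).resolve_right fun h => disjoint_right.mp hdisj hb h.2).1
  have hnbrB : ∀ a ∈ A, ∀ b, G.Adj a b → b ∈ B := fun a ha b hab =>
    ((hbip a b hab).resolve_right fun h => disjoint_left.mp hdisj ha h.1).2
  have hN : #(nbhd G A B') = 2 * #B' := card_nbhd_of_pdisjNbrs G A hpd fun b hb => by
    rw [card_filter_adj_eq_degree G A (hnbrA b (hB' hb)), hdegB b (hB' hb)]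
  have hcov (a : V) (ha : a ∈ A \ nbhd G A B') : ∃ b ∈ B \ B', G.Adj a b := by
    have haA := (mem_sdiff.mp ha).1
    exact exists_adj_mem_sdiff_of_mem_sdiff_nbhd G A ha (by rw [hdegA a haA]; omega)
      (hnbrB a haA)
  obtain ⟨S', hS'B, hcard, hcover, hpriv⟩ :=
    exists_subset_card_eq_of_card_filter_adj_le_one G A sdiff_subset hcov fun b hb =>
      card_filter_adj_sdiff_nbhd_le_one G A B hB' hpd hmax hb (hnbrA b (mem_sdiff.mp hb).1)
        (hdegB b (mem_sdiff.mp hb).1)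
  have hR : #(A \ nbhd G A B') = #A - 2 * #B' := by
    rw [card_sdiff_of_subset (nbhd_subset G A B'), hN]
  have h2B' : 2 * #B' ≤ #A := hN ▸ card_le_card (nbhd_subset G A B')
  refine ⟨S', hS'B, hcard, hcard.trans hR, hcover, fun b hb => ?_,
    nbhd_union_eq_of_sdiff_subset G A hcover, ?_⟩
  · rw [← hpriv b hb, sdiff_eq_filter, filter_filter]
  · rw [card_union_of_disjoint (disjoint_of_subset_right hS'B disjoint_sdiff), hcard, hR]
    omega
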